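/- On a finite probability space, let A ⫫ (Y, S) | X (ignorability) with positivity on a binary treatment A, and let Ỹ = E[Y | S, X]. Assume additionally surrogacy A ⫫ Y | (S, X). Then the average treatment effect on Ỹ equals the average treatment effect on Y: E[Ỹ(1) − Ỹ(0)] = E[Y(1) − Y(0)], where for a random variable Z, E[Z(a)] denotes E[Z·1{A=a}/P(A=a|X)]. -/
import Mathlib


open Finset
open scoped BigOperators Classical

/-- Probability of an event on a finite space with weights `P`. -/
noncomputable def prb {Ω : Type*} [Fintype Ω] (P : Ω → ℝ) (E : Ω → Prop) : ℝ :=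
  ∑ ω, if E ω then P ω else 0

/-- Expectation of `f` on a finite space with weights `P`. -/
noncomputable def pexp {Ω : Type*} [Fintype Ω] (P : Ω → ℝ) (f : Ω → ℝ) : ℝ :=
  ∑ ω, P ω * f ω

/-- Conditional expectation of `f` given the event `E`. -/
noncomputable def cexp {Ω : Type*} [Fintype Ω] (P : Ω → ℝ) (f : Ω → ℝ) (E : Ω → Prop) : ℝ :=
  (∑ ω, if E ω then P ω * f ω else 0) / prb P E

lemma prb_congr {Ω : Type*} [Fintype Ω] (P : Ω → ℝ) {E E' : Ω → Prop}
    (h : ∀ ω, E ω ↔ E' ω) : prb P E = prb P E' := by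
  have : E = E' := funext fun ω => propext (h ω)
  rw [this]

lemma prb_zero {Ω : Type*} [Fintype Ω] (P : Ω → ℝ) (hP : ∀ ω, 0 ≤ P ω) (E : Ω → Prop)
    (h : prb P E = 0) (ω : Ω) (hω : E ω) : P ω = 0 := by
  rw [prb] at h
  have hnn : ∀ ω' ∈ Finset.univ, (0:ℝ) ≤ if E ω' then P ω' else 0 := by
    intro ω' _; split <;> simp [hP ω']
  have := (Finset.sum_eq_zero_iff_of_nonneg hnn).mp h ω (Finset.mem_univ ω)
  simpa [hω] using this

lemma sumY {Ω : Type*} [Fintype Ω] (P : Ω → ℝ) (Y : Ω → ℝ) (C : Ω → Prop) :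
    ∑ y ∈ Finset.univ.image Y, y * prb P (fun ω => C ω ∧ Y ω = y)
      = prb (fun ω => P ω * Y ω) C := by
  simp only [prb, Finset.mul_sum]
  rw [Finset.sum_comm]
  refine Finset.sum_congr rfl fun ω _ => ?_
  by_cases h2 : C ω
  · simp only [h2, true_and, if_true, mul_ite, mul_zero]
    rw [Finset.sum_ite_eq, if_pos (Finset.mem_image_of_mem Y (Finset.mem_univ ω)), mul_comm]
  · simp [h2]

lemma key {Ω 𝒳 𝒮 : Type*} [Fintype Ω]
    (P : Ω → ℝ) (hP : ∀ ω, 0 ≤ P ω)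
    (X : Ω → 𝒳) (A : Ω → ℝ) (S : Ω → 𝒮) (Y : Ω → ℝ)
    (hsur : ∀ (a y : ℝ) (s : 𝒮) (x : 𝒳),
      prb P (fun ω => A ω = a ∧ Y ω = y ∧ S ω = s ∧ X ω = x)
          * prb P (fun ω => S ω = s ∧ X ω = x)
        = prb P (fun ω => A ω = a ∧ S ω = s ∧ X ω = x)
          * prb P (fun ω => Y ω = y ∧ S ω = s ∧ X ω = x))
    (Ytil : Ω → ℝ)
    (hYtil : ∀ ω, Ytil ω = cexp P Y (fun ω' => S ω' = S ω ∧ X ω' = X ω))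
    (g : Ω → ℝ)
    (hg : ∀ ω ω', A ω = A ω' → S ω = S ω' → X ω = X ω' → g ω = g ω') :
    ∑ ω, P ω * (Ytil ω * g ω) = ∑ ω, P ω * (Y ω * g ω) := by
  classical
  have hmap : ∀ ω ∈ Finset.univ, (A ω, S ω, X ω) ∈
      Finset.univ.image (fun ω => (A ω, S ω, X ω)) :=
    fun ω _ => Finset.mem_image_of_mem _ (Finset.mem_univ ω)
  rw [← Finset.sum_fiberwise_of_maps_to hmap (fun ω => P ω * (Ytil ω * g ω)),
      ← Finset.sum_fiberwise_of_maps_to hmap (fun ω => P ω * (Y ω * g ω))]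
  refine Finset.sum_congr rfl fun p hp => ?_
  obtain ⟨a, s, x⟩ := p
  obtain ⟨ω0, -, hω0⟩ := Finset.mem_image.mp hp
  have hω0' : A ω0 = a ∧ S ω0 = s ∧ X ω0 = x := by
    simpa [Prod.ext_iff] using hω0
  set F := Finset.univ.filter (fun ω => (A ω, S ω, X ω) = (a, s, x)) with hF
  have hmem : ∀ ω ∈ F, A ω = a ∧ S ω = s ∧ X ω = x := by
    intro ω hω
    simpa [hF, Prod.ext_iff] using (Finset.mem_filter.mp hω).2
  set T := cexp P Y (fun ω' => S ω' = s ∧ X ω' = x) with hT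
  have hL : ∀ ω ∈ F, P ω * (Ytil ω * g ω) = P ω * (T * g ω0) := by
    intro ω hω
    obtain ⟨h1, h2, h3⟩ := hmem ω hω
    rw [hYtil ω, h2, h3, hg ω ω0 (h1.trans hω0'.1.symm) (h2.trans hω0'.2.1.symm)
      (h3.trans hω0'.2.2.symm)]
  have hR : ∀ ω ∈ F, P ω * (Y ω * g ω) = (P ω * Y ω) * g ω0 := by
    intro ω hω
    obtain ⟨h1, h2, h3⟩ := hmem ω hω
    rw [hg ω ω0 (h1.trans hω0'.1.symm) (h2.trans hω0'.2.1.symm)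
      (h3.trans hω0'.2.2.symm), mul_assoc]
  rw [Finset.sum_congr rfl hL, Finset.sum_congr rfl hR, ← Finset.sum_mul, ← Finset.sum_mul]
  have claim : (∑ ω ∈ F, P ω) * T = ∑ ω ∈ F, P ω * Y ω := by
    by_cases hQ : prb P (fun ω => S ω = s ∧ X ω = x) = 0
    · have hz : ∀ ω, S ω = s → X ω = x → P ω = 0 := fun ω h1 h2 =>
        prb_zero P hP _ hQ ω ⟨h1, h2⟩
      have h1 : ∑ ω ∈ F, P ω = 0 :=
        Finset.sum_eq_zero fun ω hω => hz ω (hmem ω hω).2.1 (hmem ω hω).2.2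
      have h2 : ∑ ω ∈ F, P ω * Y ω = 0 :=
        Finset.sum_eq_zero fun ω hω => by rw [hz ω (hmem ω hω).2.1 (hmem ω hω).2.2, zero_mul]
      rw [h1, h2, zero_mul]
    · have hPA : ∑ ω ∈ F, P ω = prb P (fun ω => A ω = a ∧ S ω = s ∧ X ω = x) := by
        rw [hF, Finset.sum_filter, prb]
        exact Finset.sum_congr rfl fun ω _ => by
          by_cases h : A ω = a ∧ S ω = s ∧ X ω = x
          · simp [h, h.1, h.2.1, h.2.2]
          · have h' : ¬ (A ω, S ω, X ω) = (a, s, x) := by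
              simpa [Prod.ext_iff, and_assoc] using h
            simp [h, h']
      have hM : ∑ ω ∈ F, P ω * Y ω
          = prb (fun ω => P ω * Y ω) (fun ω => A ω = a ∧ S ω = s ∧ X ω = x) := by
        rw [hF, Finset.sum_filter, prb]
        exact Finset.sum_congr rfl fun ω _ => by
          by_cases h : A ω = a ∧ S ω = s ∧ X ω = x
          · simp [h, h.1, h.2.1, h.2.2]
          · have h' : ¬ (A ω, S ω, X ω) = (a, s, x) := by
              simpa [Prod.ext_iff, and_assoc] using h
            simp [h, h']
      have star : prb (fun ω => P ω * Y ω) (fun ω => A ω = a ∧ S ω = s ∧ X ω = x)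
            * prb P (fun ω => S ω = s ∧ X ω = x)
          = prb P (fun ω => A ω = a ∧ S ω = s ∧ X ω = x)
            * prb (fun ω => P ω * Y ω) (fun ω => S ω = s ∧ X ω = x) := by
        rw [← sumY P Y (fun ω => A ω = a ∧ S ω = s ∧ X ω = x),
            ← sumY P Y (fun ω => S ω = s ∧ X ω = x), Finset.sum_mul, Finset.mul_sum]
        refine Finset.sum_congr rfl fun y _ => ?_
        have e1 : prb P (fun ω => (A ω = a ∧ S ω = s ∧ X ω = x) ∧ Y ω = y)
            = prb P (fun ω => A ω = a ∧ Y ω = y ∧ S ω = s ∧ X ω = x) :=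
          prb_congr P fun ω => by tauto
        have e2 : prb P (fun ω => (S ω = s ∧ X ω = x) ∧ Y ω = y)
            = prb P (fun ω => Y ω = y ∧ S ω = s ∧ X ω = x) :=
          prb_congr P fun ω => by tauto
        rw [e1, e2, mul_assoc, hsur a y s x]
        ring
      have hTval : T = prb (fun ω => P ω * Y ω) (fun ω' => S ω' = s ∧ X ω' = x)
          / prb P (fun ω' => S ω' = s ∧ X ω' = x) := rfl
      rw [hTval, hPA, hM]
      field_simp
      linarith [star]
  rw [← mul_assoc, claim]

/-- under ignorability, positivity and surrogacy, the (Horvitz–Thompson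
identified) average treatment effect on the surrogate index `Ỹ` equals the average
treatment effect on the true long-term outcome `Y`. -/
theorem stmt_11 {Ω 𝒳 𝒮 : Type*} [Fintype Ω]
    (P : Ω → ℝ) (hP : ∀ ω, 0 ≤ P ω) (hPsum : ∑ ω, P ω = 1)
    (X : Ω → 𝒳) (A : Ω → ℝ) (hA : ∀ ω, A ω = 0 ∨ A ω = 1)
    (S : Ω → 𝒮) (Y : Ω → ℝ)
    -- ignorability: A ⫫ (Y, S) | X
    (hig : ∀ (a y : ℝ) (s : 𝒮) (x : 𝒳),
      prb P (fun ω => A ω = a ∧ Y ω = y ∧ S ω = s ∧ X ω = x) * prb P (fun ω => X ω = x)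
        = prb P (fun ω => A ω = a ∧ X ω = x)
          * prb P (fun ω => Y ω = y ∧ S ω = s ∧ X ω = x))
    -- propensity and positivity
    (e : 𝒳 → ℝ)
    (he : ∀ x, e x = prb P (fun ω => A ω = 1 ∧ X ω = x) / prb P (fun ω => X ω = x))
    (hpos : ∀ x, 0 < prb P (fun ω => X ω = x) → 0 < e x ∧ e x < 1)
    -- surrogacy: A ⫫ Y | (S, X)
    (hsur : ∀ (a y : ℝ) (s : 𝒮) (x : 𝒳),
      prb P (fun ω => A ω = a ∧ Y ω = y ∧ S ω = s ∧ X ω = x)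
          * prb P (fun ω => S ω = s ∧ X ω = x)
        = prb P (fun ω => A ω = a ∧ S ω = s ∧ X ω = x)
          * prb P (fun ω => Y ω = y ∧ S ω = s ∧ X ω = x))
    -- surrogate index
    (Ytil : Ω → ℝ)
    (hYtil : ∀ ω, Ytil ω = cexp P Y (fun ω' => S ω' = S ω ∧ X ω' = X ω)) :
    pexp P (fun ω => Ytil ω * A ω / e (X ω))
        - pexp P (fun ω => Ytil ω * (1 - A ω) / (1 - e (X ω)))
      = pexp P (fun ω => Y ω * A ω / e (X ω))
        - pexp P (fun ω => Y ω * (1 - A ω) / (1 - e (X ω))) := by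
  have e1 : pexp P (fun ω => Ytil ω * A ω / e (X ω))
      = pexp P (fun ω => Y ω * A ω / e (X ω)) := by
    unfold pexp
    simp only [mul_div_assoc]
    exact key P hP X A S Y hsur Ytil hYtil (fun ω => A ω / e (X ω))
      (fun ω ω' h1 _ h3 => by simp only [h1, h3])
  have e2 : pexp P (fun ω => Ytil ω * (1 - A ω) / (1 - e (X ω)))
      = pexp P (fun ω => Y ω * (1 - A ω) / (1 - e (X ω))) := by
    unfold pexp
    simp only [mul_div_assoc]
    exact key P hP X A S Y hsur Ytil hYtil (fun ω => (1 - A ω) / (1 - e (X ω)))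
      (fun ω ω' h1 _ h3 => by simp only [h1, h3])
  rw [e1, e2]
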